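/- arXiv:1601.05305 — 3 statements merged into one kernel-verified Lean document; each statement's English description precedes it below -/
import Mathlib

section
/- For every n ≥ 5, there exists an n-vertex 4-chordal graph that has no clique transversal with fewer than ⌊2(n-1)/7⌋ vertices. -/
open SimpleGraph

/-- A graph is *chordal* if it contains no induced cycle of length four or more. -/
def Chordal {V : Type*} (G : SimpleGraph V) : Prop :=
  ∀ n : ℕ, 4 ≤ n → IsEmpty (cycleGraph n ↪g G)

/-- A set of vertices is a *maximal clique* if it is a clique and is
inclusion-wise maximal among cliques. -/
def IsMaximalClique {V : Type*} (G : SimpleGraph V) (s : Set V) : Prop :=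
  G.IsClique s ∧ ∀ t : Set V, G.IsClique t → s ⊆ t → s = t

/-- A chordal graph is *k-chordal* if each of its edges is contained in a clique
on `k` vertices. -/
def KChordal {V : Type*} (k : ℕ) (G : SimpleGraph V) : Prop :=
  Chordal G ∧ ∀ v w : V, G.Adj v w →
    ∃ s : Set V, G.IsClique s ∧ s.ncard = k ∧ v ∈ s ∧ w ∈ s

/-- A *clique transversal* of `G` is a set of vertices meeting every non-trivial
(i.e. with at least two vertices) maximal clique of `G`. -/
def CliqueTransversal {V : Type*} (G : SimpleGraph V) (U : Set V) : Prop :=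
  ∀ s : Set V, IsMaximalClique G s → s.Nontrivial → (s ∩ U).Nonempty

/-!
Take the union of `K₄`s ("blocks") on `0, …, n-1` in which the later neighbours of every vertex
lie in a single block. The order is then a perfect elimination ordering, so the graph is chordal,
and it is 4-chordal since every edge lies in a block. Writing `n - 1 = 7m + r` with `r < 7`, the
blocks on the first `7m + 1` vertices are arranged along a path so that `K₄`s alternate with
triangles that are maximal cliques although each of their edges lies in a block; this gives `2m`
pairwise disjoint non-trivial maximal cliques, and one more disjoint `K₄` fits in when `r ≥ 4`.
A clique transversal meets each of these `2m + ⌊r/4⌋ = ⌊2(n-1)/7⌋` cliques.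
-/

open Set Function

section General

variable {V W : Type*}

theorem Chordal.comap {G : SimpleGraph W} (hG : Chordal G) (f : V ↪ W) :
    Chordal (G.comap f) :=
  fun k hk => ⟨fun e => (hG k hk).false (e.trans (Embedding.comap f G))⟩

theorem cycleGraph_add_one_ne_sub_one_and_not_adj {k : ℕ} [NeZero k] (hk : 4 ≤ k) (i : Fin k) :
    i + 1 ≠ i - 1 ∧ ¬(cycleGraph k).Adj (i + 1) (i - 1) := by
  have two : (1 + 1 : Fin k).val = 2 := by
    rw [Fin.val_add, Fin.val_one', Nat.mod_eq_of_lt (show 1 < k by omega),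
      Nat.mod_eq_of_lt (show 1 + 1 < k by omega)]
  have h2 : i + 1 - (i - 1) = 1 + 1 := by abel
  have h3 : i - 1 - (i + 1) = -(1 + 1) := by abel
  constructor
  · intro h
    rw [h, sub_self, Fin.ext_iff, two] at h2
    simp at h2
  · rw [cycleGraph_adj', h2, h3, Fin.val_neg', two, Nat.mod_eq_of_lt (show k - 2 < k by omega)]
    omega

/-- The least vertex of an induced cycle would have two non-adjacent later neighbours. -/
theorem chordal_of_adj_of_lt [LinearOrder V] {G : SimpleGraph V}
    (h : ∀ ⦃v x y⦄, v < x → v < y → x ≠ y → G.Adj v x → G.Adj v y → G.Adj x y) :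
    Chordal G := by
  intro k hk
  have : NeZero k := ⟨by omega⟩
  refine ⟨fun e => ?_⟩
  obtain ⟨i, hi⟩ := Finite.exists_min fun x => e x
  have later : ∀ x, (cycleGraph k).Adj i x → e i < e x := fun x hx =>
    (hi x).lt_of_ne (e.injective.ne hx.ne)
  have hnext : (cycleGraph k).Adj i (i + 1) := by
    rw [cycleGraph_adj', add_sub_cancel_left, Fin.val_one', Nat.mod_eq_of_lt (by omega)]
    exact Or.inr rfl
  have hprev : (cycleGraph k).Adj i (i - 1) := by
    rw [cycleGraph_adj', sub_sub_cancel, Fin.val_one', Nat.mod_eq_of_lt (by omega)]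
    exact Or.inl rfl
  obtain ⟨hne, hnadj⟩ := cycleGraph_add_one_ne_sub_one_and_not_adj hk i
  exact hnadj <| e.map_adj_iff.mp <| h (later _ hnext) (later _ hprev) (e.injective.ne hne)
    (e.map_adj_iff.mpr hnext) (e.map_adj_iff.mpr hprev)

theorem IsMaximalClique.comap {G : SimpleGraph W} {D : Set W} (hD : IsMaximalClique G D)
    {f : V → W} (hf : Injective f) (hDf : D ⊆ range f) :
    IsMaximalClique (G.comap f) (f ⁻¹' D) := by
  refine ⟨fun x hx y hy hxy => hD.1 hx hy (hf.ne hxy), fun t ht hDt => hDt.antisymm ?_⟩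
  have himage : G.IsClique (f '' t) := by
    rintro _ ⟨x, hx, rfl⟩ _ ⟨y, hy, rfl⟩ hxy
    exact ht hx hy fun h => hxy (h ▸ rfl)
  have hsub : D ⊆ f '' t := fun w hw => by
    obtain ⟨x, rfl⟩ := hDf hw
    exact ⟨x, hDt hw, rfl⟩
  rw [hD.2 _ himage hsub]
  exact subset_preimage_image f t

theorem Set.Nontrivial.preimage_of_subset_range {s : Set W} (hs : s.Nontrivial) {f : V → W}
    (hsf : s ⊆ range f) : (f ⁻¹' s).Nontrivial := by
  obtain ⟨_, hx, _, hy, hxy⟩ := hs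
  obtain ⟨x, rfl⟩ := hsf hx
  obtain ⟨y, rfl⟩ := hsf hy
  exact ⟨x, hx, y, hy, fun h => hxy (h ▸ rfl)⟩

theorem card_le_ncard_of_cliqueTransversal [Finite V] {G : SimpleGraph V} {U : Set V}
    (hU : CliqueTransversal G U) {ι : Type*} (D : ι → Set V) (hD : Pairwise (Disjoint on D))
    (hmax : ∀ i, IsMaximalClique G (D i)) (hnt : ∀ i, (D i).Nontrivial) :
    Nat.card ι ≤ U.ncard := by
  choose x hxD hxU using fun i => hU (D i) (hmax i) (hnt i)
  have hinj : Injective fun i => (⟨x i, hxU i⟩ : U) := fun i j hij => by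
    by_contra hne
    exact (hD hne).ne_of_mem (hxD i) (hxD j) (congrArg Subtype.val hij)
  exact (Nat.card_le_card_of_injective _ hinj).trans_eq (Nat.card_coe_set_eq U)

end General

section CliqueUnion

variable {V W : Type*}

def cliqueUnion (F : Set (Set V)) : SimpleGraph V where
  Adj v w := v ≠ w ∧ ∃ s ∈ F, v ∈ s ∧ w ∈ s
  symm := ⟨fun _ _ ⟨hne, s, hs, hv, hw⟩ => ⟨hne.symm, s, hs, hw, hv⟩⟩
  loopless := ⟨fun _ h => h.1 rfl⟩

theorem cliqueUnion_adj {F : Set (Set V)} {v w : V} :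
    (cliqueUnion F).Adj v w ↔ v ≠ w ∧ ∃ s ∈ F, v ∈ s ∧ w ∈ s :=
  Iff.rfl

theorem isClique_cliqueUnion_of_mem {F : Set (Set V)} {s : Set V} (hs : s ∈ F) :
    (cliqueUnion F).IsClique s :=
  fun _ hv _ hw hne => cliqueUnion_adj.mpr ⟨hne, s, hs, hv, hw⟩

theorem isMaximalClique_cliqueUnion_of_private_mem {F : Set (Set V)} {D : Set V} {w : V}
    (hD : D ∈ F) (hw : w ∈ D) (hprivate : ∀ t ∈ F, w ∈ t → t ⊆ D) :
    IsMaximalClique (cliqueUnion F) D :=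
  ⟨isClique_cliqueUnion_of_mem hD, fun _ ht hDt => hDt.antisymm fun y hy =>
    (eq_or_ne w y).elim (· ▸ hw) fun hne =>
      have ⟨_, t, htF, hwt, hyt⟩ := ht (hDt hw) hy hne
      hprivate t htF hwt hyt⟩

variable [LinearOrder V]

def LaterNeighborsCovered (F : Set (Set V)) : Prop :=
  ∀ ⦃v w⦄, (cliqueUnion F).Adj v w → v < w →
    ∃ s ∈ F, ∀ ⦃x⦄, (cliqueUnion F).Adj v x → v < x → x ∈ s

variable {F : Set (Set V)}

theorem LaterNeighborsCovered.chordal (hF : LaterNeighborsCovered F) :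
    Chordal (cliqueUnion F) :=
  chordal_of_adj_of_lt fun _ _ _ hvx hvy hxy hx hy =>
    have ⟨_, hs, hsub⟩ := hF hx hvx
    isClique_cliqueUnion_of_mem hs (hsub hx hvx) (hsub hy hvy) hxy

/-- An earlier vertex adjacent to all of `D` would put `D` inside one block. -/
theorem LaterNeighborsCovered.isMaximalClique (hF : LaterNeighborsCovered F) {D : Set V} {v : V}
    (hD : (cliqueUnion F).IsClique D) (hv : v ∈ D) (hmin : ∀ w ∈ D, v ≤ w)
    (hlater : ∀ w, (cliqueUnion F).Adj v w → v < w → w ∈ D) (hblock : ∀ s ∈ F, ¬D ⊆ s) :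
    IsMaximalClique (cliqueUnion F) D := by
  refine ⟨hD, fun t ht hDt => hDt.antisymm fun y hy => ?_⟩
  rcases lt_trichotomy y v with hyv | rfl | hvy
  · have hadj : ∀ w ∈ D, (cliqueUnion F).Adj y w := fun w hw =>
      ht hy (hDt hw) (hyv.trans_le (hmin w hw)).ne
    obtain ⟨s, hs, hsub⟩ := hF (hadj v hv) hyv
    exact absurd (fun w hw => hsub (hadj w hw) (hyv.trans_le (hmin w hw))) (hblock s hs)
  · exact hv
  · exact hlater y (ht (hDt hv) hy hvy.ne) hvy

theorem kChordal_comap_cliqueUnion (hF : LaterNeighborsCovered F) {k : ℕ}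
    (hk : ∀ s ∈ F, s.ncard = k) (f : W ↪ V) (hf : ∀ s ∈ F, s ⊆ range f) :
    KChordal k ((cliqueUnion F).comap f) := by
  refine ⟨hF.chordal.comap f, fun v w ⟨_, s, hs, hv, hw⟩ => ⟨f ⁻¹' s, ?_, ?_, hv, hw⟩⟩
  · exact fun x hx y hy hxy => isClique_cliqueUnion_of_mem hs hx hy (f.injective.ne hxy)
  · rw [ncard_preimage_of_injective_subset_range f.injective (hf s hs), hk s hs]

end CliqueUnion

namespace FourChordalConstruction

/-- For `m ≥ 1` the vertices `0, …, 7m` carry the `K₄`s `[0,4)` and `A j = [7j+4, 7j+8)`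
(`j < m`) and the triangles `T j = {7j+1, 7j+2, 7j+3}` (`0 < j < m`). Each edge of `T (j+1)` lies
in a block shared with a neighbouring clique: `{7j+6, 7j+7, 7j+8, 7j+10}` with `A j`,
`{7j+2, 7j+3, 7j+8, 7j+9}` with `T j` (or `[0,4)`), and the next such block with `T (j+2)`;
the last triangle (or `[0,4)`) is glued to `A (m-1)` by `[7m-5, 7m-1)`. The `k` extra `K₄`s
follow from vertex `7m+1` on. -/
def blocks (m k : ℕ) : Set (Set ℕ) :=
  {s | (0 < m ∧ s = Ico 0 4) ∨
    (∃ j < m, s = Ico (7 * j + 4) (7 * j + 8)) ∨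
    (∃ j, j + 1 < m ∧ s = {7 * j + 6, 7 * j + 7, 7 * j + 8, 7 * j + 10}) ∨
    (∃ j, j + 1 < m ∧ s = {7 * j + 2, 7 * j + 3, 7 * j + 8, 7 * j + 9}) ∨
    (∃ j, j + 1 = m ∧ s = Ico (7 * j + 2) (7 * j + 6)) ∨
    (∃ i < k, s = Ico (7 * m + 4 * i + 1) (7 * m + 4 * i + 5))}

/-- The block containing all later neighbours of `v`. -/
def laterBlock (m v : ℕ) : Set ℕ :=
  if 7 * m + 1 ≤ v then
    Ico (7 * m + 4 * ((v - 7 * m - 1) / 4) + 1) (7 * m + 4 * ((v - 7 * m - 1) / 4) + 5)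
  else if v = 0 then Ico 0 4
  else if v % 7 = 0 ∨ v % 7 = 6 then
    if (v - 6) / 7 + 1 < m then
      {7 * ((v - 6) / 7) + 6, 7 * ((v - 6) / 7) + 7, 7 * ((v - 6) / 7) + 8, 7 * ((v - 6) / 7) + 10}
    else Ico (7 * ((v - 6) / 7) + 4) (7 * ((v - 6) / 7) + 8)
  else if v % 7 ≤ 3 then
    if v / 7 + 1 < m then {7 * (v / 7) + 2, 7 * (v / 7) + 3, 7 * (v / 7) + 8, 7 * (v / 7) + 9}
    else Ico (7 * (v / 7) + 2) (7 * (v / 7) + 6)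
  else Ico (7 * (v / 7) + 4) (7 * (v / 7) + 8)

variable {m k : ℕ}

theorem subset_Iio_of_mem_blocks {s : Set ℕ} (hs : s ∈ blocks m k) :
    s ⊆ Iio (7 * m + 4 * k + 1) := by
  intro x hx
  rcases hs with ⟨hm, rfl⟩ | ⟨j, hj, rfl⟩ | ⟨j, hj, rfl⟩ | ⟨j, hj, rfl⟩ | ⟨j, hj, rfl⟩ |
    ⟨i, hi, rfl⟩ <;> simp only [mem_Ico, mem_insert_iff, mem_singleton_iff, mem_Iio] at hx ⊢ <;>
    omega

theorem ncard_of_mem_blocks {s : Set ℕ} (hs : s ∈ blocks m k) : s.ncard = 4 := by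
  rcases hs with ⟨hm, rfl⟩ | ⟨j, hj, rfl⟩ | ⟨j, hj, rfl⟩ | ⟨j, hj, rfl⟩ | ⟨j, hj, rfl⟩ |
    ⟨i, hi, rfl⟩
  all_goals first
    | rw [ncard_Ico_nat] <;> omega
    | refine ncard_eq_four.mpr ⟨_, _, _, _, ?_, ?_, ?_, ?_, ?_, ?_, rfl⟩ <;> omega

theorem laterBlock_mem_blocks {s : Set ℕ} (hs : s ∈ blocks m k) {v : ℕ} (hv : v ∈ s) :
    laterBlock m v ∈ blocks m k := by
  have hlt : v < 7 * m + 4 * k + 1 := subset_Iio_of_mem_blocks hs hv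
  have hm : v = 0 → 0 < m := by
    rintro rfl
    rcases hs with ⟨hm, rfl⟩ | ⟨j, hj, rfl⟩ | ⟨j, hj, rfl⟩ | ⟨j, hj, rfl⟩ | ⟨j, hj, rfl⟩ |
      ⟨i, hi, rfl⟩ <;> simp only [mem_Ico, mem_insert_iff, mem_singleton_iff] at hv <;> omega
  unfold laterBlock
  split_ifs
  · exact Or.inr <| Or.inr <| Or.inr <| Or.inr <| Or.inr ⟨(v - 7 * m - 1) / 4, by omega, rfl⟩
  · exact Or.inl ⟨by omega, rfl⟩
  · exact Or.inr <| Or.inr <| Or.inl ⟨_, by omega, rfl⟩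
  · exact Or.inr <| Or.inl ⟨_, by omega, rfl⟩
  · exact Or.inr <| Or.inr <| Or.inr <| Or.inl ⟨_, by omega, rfl⟩
  · exact Or.inr <| Or.inr <| Or.inr <| Or.inr <| Or.inl ⟨_, by omega, rfl⟩
  · exact Or.inr <| Or.inl ⟨_, by omega, rfl⟩

theorem mem_laterBlock {s : Set ℕ} (hs : s ∈ blocks m k) {v x : ℕ} (hv : v ∈ s) (hx : x ∈ s)
    (hvx : v < x) : x ∈ laterBlock m v := by
  rcases hs with ⟨hm, rfl⟩ | ⟨j, hj, rfl⟩ | ⟨j, hj, rfl⟩ | ⟨j, hj, rfl⟩ | ⟨j, hj, rfl⟩ |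
    ⟨i, hi, rfl⟩ <;> simp only [mem_Ico, mem_insert_iff, mem_singleton_iff] at hv hx <;>
    unfold laterBlock <;> split_ifs <;> simp only [mem_Ico, mem_insert_iff, mem_singleton_iff] <;>
    omega

theorem laterNeighborsCovered_blocks : LaterNeighborsCovered (blocks m k) := by
  rintro v - ⟨-, s, hs, hv, -⟩ -
  exact ⟨laterBlock m v, laterBlock_mem_blocks hs hv,
    fun x ⟨_, t, ht, hvt, hxt⟩ hvx => mem_laterBlock ht hvt hxt hvx⟩

/-- The `A j`, the triangles `T j` with `[0,4)` in place of the missing `T 0`, and the extra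
`K₄`s. -/
def disjointCliques (m k : ℕ) : Fin m ⊕ Fin m ⊕ Fin k → Set ℕ
  | .inl ⟨j, _⟩ => Ico (7 * j + 4) (7 * j + 8)
  | .inr (.inl ⟨j, _⟩) => if j = 0 then Ico 0 4 else {7 * j + 1, 7 * j + 2, 7 * j + 3}
  | .inr (.inr ⟨i, _⟩) => Ico (7 * m + 4 * i + 1) (7 * m + 4 * i + 5)

theorem disjointCliques_subset_Iio (i : Fin m ⊕ Fin m ⊕ Fin k) :
    disjointCliques m k i ⊆ Iio (7 * m + 4 * k + 1) := by
  intro x hx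
  rcases i with ⟨j, hj⟩ | ⟨j, hj⟩ | ⟨i, hi⟩ <;> simp only [disjointCliques] at hx <;>
    (try split_ifs at hx)
  all_goals simp only [mem_Ico, mem_insert_iff, mem_singleton_iff, mem_Iio] at hx ⊢; omega

theorem disjointCliques_nontrivial (i : Fin m ⊕ Fin m ⊕ Fin k) :
    (disjointCliques m k i).Nontrivial := by
  rcases i with ⟨j, hj⟩ | ⟨j, hj⟩ | ⟨i, hi⟩ <;> simp only [disjointCliques] <;> (try split_ifs)
  · exact nontrivial_of_mem_mem_ne (x := 7 * j + 4) (y := 7 * j + 5) (by simp) (by simp) (by omega)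
  · exact nontrivial_of_mem_mem_ne (x := 0) (y := 1) (by simp) (by simp) (by omega)
  · exact nontrivial_of_mem_mem_ne (x := 7 * j + 1) (y := 7 * j + 2) (by simp) (by simp)
      (by omega)
  · exact nontrivial_of_mem_mem_ne (x := 7 * m + 4 * i + 1) (y := 7 * m + 4 * i + 2) (by simp)
      (by simp) (by omega)

theorem pairwise_disjoint_disjointCliques : Pairwise (Disjoint on disjointCliques m k) := by
  rintro (⟨j, hj⟩ | ⟨j, hj⟩ | ⟨i, hi⟩) (⟨j', hj'⟩ | ⟨j', hj'⟩ | ⟨i', hi'⟩) hne <;>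
    simp only [onFun, disjointCliques, ne_eq, Sum.inl.injEq, Sum.inr.injEq, Fin.mk.injEq,
      reduceCtorEq, not_false_eq_true] at hne ⊢ <;> (try split_ifs) <;>
    rw [Set.disjoint_left] <;> intro x hx hx' <;>
    simp only [mem_Ico, mem_insert_iff, mem_singleton_iff] at hx hx' <;> omega

theorem isMaximalClique_head (hm : 0 < m) :
    IsMaximalClique (cliqueUnion (blocks m k)) (Ico 0 4) := by
  refine isMaximalClique_cliqueUnion_of_private_mem (w := 0) (Or.inl ⟨hm, rfl⟩) (by simp) ?_
  rintro t (⟨-, rfl⟩ | ⟨j, hj, rfl⟩ | ⟨j, hj, rfl⟩ | ⟨j, hj, rfl⟩ | ⟨j, hj, rfl⟩ | ⟨i, hi, rfl⟩)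
    hw y hy <;> simp only [mem_Ico, mem_insert_iff, mem_singleton_iff] at hw hy ⊢ <;> omega

theorem isMaximalClique_pendant {j : ℕ} (hj : j < m) :
    IsMaximalClique (cliqueUnion (blocks m k)) (Ico (7 * j + 4) (7 * j + 8)) := by
  -- the last `A j` shares its first two vertices with the block `[7j+2, 7j+6)`
  refine isMaximalClique_cliqueUnion_of_private_mem
    (w := if j + 1 < m then 7 * j + 4 else 7 * j + 7) (Or.inr <| Or.inl ⟨j, hj, rfl⟩)
    (by split_ifs <;> simp) ?_
  rintro t (⟨-, rfl⟩ | ⟨j', hj', rfl⟩ | ⟨j', hj', rfl⟩ | ⟨j', hj', rfl⟩ | ⟨j', hj', rfl⟩ |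
    ⟨i, hi, rfl⟩) hw y hy <;> split_ifs at hw <;>
    simp only [mem_Ico, mem_insert_iff, mem_singleton_iff] at hw hy ⊢ <;> omega

theorem isMaximalClique_extra {i : ℕ} (hi : i < k) :
    IsMaximalClique (cliqueUnion (blocks m k)) (Ico (7 * m + 4 * i + 1) (7 * m + 4 * i + 5)) := by
  refine isMaximalClique_cliqueUnion_of_private_mem (w := 7 * m + 4 * i + 1)
    (Or.inr <| Or.inr <| Or.inr <| Or.inr <| Or.inr ⟨i, hi, rfl⟩) (by simp) ?_
  rintro t (⟨hm, rfl⟩ | ⟨j, hj, rfl⟩ | ⟨j, hj, rfl⟩ | ⟨j, hj, rfl⟩ | ⟨j, hj, rfl⟩ |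
    ⟨i', hi', rfl⟩) hw y hy <;>
    simp only [mem_Ico, mem_insert_iff, mem_singleton_iff] at hw hy ⊢ <;> omega

theorem isClique_triangle {j : ℕ} (hj0 : j ≠ 0) (hj : j < m) :
    (cliqueUnion (blocks m k)).IsClique {7 * j + 1, 7 * j + 2, 7 * j + 3} := by
  have h12 : (cliqueUnion (blocks m k)).Adj (7 * j + 1) (7 * j + 2) :=
    isClique_cliqueUnion_of_mem (Or.inr <| Or.inr <| Or.inr <| Or.inl ⟨j - 1, by omega, rfl⟩)
      (by simp; omega) (by simp; omega) (by omega)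
  have h13 : (cliqueUnion (blocks m k)).Adj (7 * j + 1) (7 * j + 3) :=
    isClique_cliqueUnion_of_mem (Or.inr <| Or.inr <| Or.inl ⟨j - 1, by omega, rfl⟩)
      (by simp; omega) (by simp; omega) (by omega)
  have h23 : (cliqueUnion (blocks m k)).Adj (7 * j + 2) (7 * j + 3) := by
    obtain hlast | hlast : j + 1 < m ∨ j + 1 = m := by omega
    · exact isClique_cliqueUnion_of_mem
        (Or.inr <| Or.inr <| Or.inr <| Or.inl ⟨j, hlast, rfl⟩) (by simp) (by simp) (by omega)
    · exact isClique_cliqueUnion_of_mem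
        (Or.inr <| Or.inr <| Or.inr <| Or.inr <| Or.inl ⟨j, hlast, rfl⟩) (by simp) (by simp)
        (by omega)
  simpa using (is3Clique_triple_iff.mpr ⟨h12, h13, h23⟩).isClique

theorem isMaximalClique_triangle {j : ℕ} (hj0 : j ≠ 0) (hj : j < m) :
    IsMaximalClique (cliqueUnion (blocks m k)) {7 * j + 1, 7 * j + 2, 7 * j + 3} := by
  refine laterNeighborsCovered_blocks.isMaximalClique (isClique_triangle hj0 hj)
    (v := 7 * j + 1) (by simp) (by simp) ?_ ?_
  · rintro y ⟨-, t, ht, hv, hy⟩ hvy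
    rcases ht with ⟨-, rfl⟩ | ⟨j', hj', rfl⟩ | ⟨j', hj', rfl⟩ | ⟨j', hj', rfl⟩ | ⟨j', hj', rfl⟩ |
      ⟨i, hi, rfl⟩ <;> simp only [mem_Ico, mem_insert_iff, mem_singleton_iff] at hv hy ⊢ <;> omega
  · intro t ht hsub
    have h1 := hsub (by simp : 7 * j + 1 ∈ ({7 * j + 1, 7 * j + 2, 7 * j + 3} : Set ℕ))
    have h2 := hsub (by simp : 7 * j + 2 ∈ ({7 * j + 1, 7 * j + 2, 7 * j + 3} : Set ℕ))
    have h3 := hsub (by simp : 7 * j + 3 ∈ ({7 * j + 1, 7 * j + 2, 7 * j + 3} : Set ℕ))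
    rcases ht with ⟨-, rfl⟩ | ⟨j', hj', rfl⟩ | ⟨j', hj', rfl⟩ | ⟨j', hj', rfl⟩ | ⟨j', hj', rfl⟩ |
      ⟨i, hi, rfl⟩ <;> simp only [mem_Ico, mem_insert_iff, mem_singleton_iff] at h1 h2 h3 <;>
      omega

theorem isMaximalClique_disjointCliques (i : Fin m ⊕ Fin m ⊕ Fin k) :
    IsMaximalClique (cliqueUnion (blocks m k)) (disjointCliques m k i) := by
  rcases i with ⟨j, hj⟩ | ⟨j, hj⟩ | ⟨i, hi⟩ <;> simp only [disjointCliques]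
  · exact isMaximalClique_pendant hj
  · split_ifs with hj0
    · exact isMaximalClique_head (by omega)
    · exact isMaximalClique_triangle hj0 hj
  · exact isMaximalClique_extra hi

end FourChordalConstruction

open FourChordalConstruction in
/-- For every `n ≥ 5` there exists an `n`-vertex 4-chordal graph with no clique
transversal with fewer than `⌊2(n-1)/7⌋` vertices. -/
theorem exists_four_chordal_with_large_clique_transversal_number (n : ℕ) (hn : 5 ≤ n) :
    ∃ G : SimpleGraph (Fin n), KChordal 4 G ∧
      ∀ U : Set (Fin n), CliqueTransversal G U → 2 * (n - 1) / 7 ≤ U.ncard := by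
  set m := (n - 1) / 7
  set k := (n - 1) % 7 / 4
  have hrange : Iio (7 * m + 4 * k + 1) ⊆ range (Fin.valEmbedding : Fin n ↪ ℕ) := by
    change _ ⊆ range Fin.val
    rw [Fin.range_val]
    exact Iio_subset_Iio (by omega)
  refine ⟨(cliqueUnion (blocks m k)).comap Fin.valEmbedding,
    kChordal_comap_cliqueUnion laterNeighborsCovered_blocks (fun _ => ncard_of_mem_blocks) _
      fun _ hs => (subset_Iio_of_mem_blocks hs).trans hrange, fun U hU => ?_⟩
  have hD (i) : disjointCliques m k i ⊆ range Fin.valEmbedding :=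
    (disjointCliques_subset_Iio i).trans hrange
  calc 2 * (n - 1) / 7 ≤ Nat.card (Fin m ⊕ Fin m ⊕ Fin k) := by simp; omega
    _ ≤ U.ncard := card_le_ncard_of_cliqueTransversal hU
      (fun i => Fin.valEmbedding ⁻¹' disjointCliques m k i)
      (fun i j hij => (pairwise_disjoint_disjointCliques hij).preimage _)
      (fun i => (isMaximalClique_disjointCliques i).comap Fin.valEmbedding.injective (hD i))
      (fun i => (disjointCliques_nontrivial i).preimage_of_subset_range (hD i))
end

section
/- For every integer k ≥ 0, there exists a 4-chordal graph on exactly 7k+8 vertices that contains 2k+2 pairwise vertex-disjoint maximal non-trivial cliques; consequently, every clique transversal of this graph has at least 2k+2 vertices. -/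
open SimpleGraph

/-!
Take `k + 2` disjoint copies `Q₀, …, Q_{k+1}` of `K₄` and `k` disjoint triangles
`Tᵢ = {aᵢ, bᵢ, cᵢ}`, and glue in further `K₄`'s: one on `{bᵢ, cᵢ, aᵢ₊₁, bᵢ₊₁}` for `i + 1 < k`,
and, when `k ≥ 1`, one on a fixed edge of each `Q_j` together with `a₀b₀` (for `j = 0`),
`a_{j-1}c_{j-1}` (for `1 ≤ j ≤ k`) or `b_{k-1}c_{k-1}` (for `j = k + 1`). Every edge then lies in
a `K₄`; listing the quads before the triangles, the later neighbours of every vertex form a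
clique, so the graph is chordal. No outside vertex sees a whole quad or all three corners of a
triangle, so the quads and triangles are `2k + 2` disjoint maximal cliques, and a clique
transversal needs one vertex in each.
-/

section General

variable {V : Type*} {G : SimpleGraph V}

theorem isMaximalClique_of_forall_exists_not_adj {s : Set V} (hs : G.IsClique s)
    (h : ∀ u ∉ s, ∃ v ∈ s, ¬G.Adj u v) : IsMaximalClique G s := by
  refine ⟨hs, fun t ht hst => hst.antisymm fun u hu => ?_⟩
  by_contra hus
  obtain ⟨v, hv, huv⟩ := h u hus
  exact huv (ht hu (hst hv) (ne_of_mem_of_not_mem hv hus).symm)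

theorem isClique_ncard_eq_four {a b c d : V} (hab : G.Adj a b) (hac : G.Adj a c)
    (had : G.Adj a d) (hbc : G.Adj b c) (hbd : G.Adj b d) (hcd : G.Adj c d) :
    G.IsClique {a, b, c, d} ∧ ({a, b, c, d} : Set V).ncard = 4 := by
  refine ⟨?_, Set.ncard_eq_four.2
    ⟨a, b, c, d, hab.ne, hac.ne, had.ne, hbc.ne, hbd.ne, hcd.ne, rfl⟩⟩
  simp [isClique_insert, hab, hac, had, hbc, hbd, hcd]

theorem CliqueTransversal.card_le_ncard {ι : Type*} [Finite ι] {cliques : ι → Set V}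
    (hcliques : ∀ i, IsMaximalClique G (cliques i) ∧ (cliques i).Nontrivial)
    (hdisj : Pairwise fun i j => Disjoint (cliques i) (cliques j)) {U : Set V}
    (hU : CliqueTransversal G U) (hfin : U.Finite) : Nat.card ι ≤ U.ncard := by
  have hmeet i : (cliques i ∩ U).Nonempty := hU _ (hcliques i).1 (hcliques i).2
  choose g hg using hmeet
  have : Finite U := hfin
  rw [← Nat.card_coe_set_eq]
  refine Nat.card_le_card_of_injective (fun i => (⟨g i, (hg i).2⟩ : U)) fun i j hij => ?_
  by_contra hne
  have hgij : g i = g j := congrArg Subtype.val hij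
  exact Set.disjoint_left.1 (hdisj hne) (hg i).1 (hgij ▸ (hg j).1)

open Fin.CommRing in
theorem chordal_of_forall_lt_adj [LinearOrder V]
    (h : ∀ ⦃v w x⦄, v < w → v < x → w ≠ x → G.Adj v w → G.Adj v x → G.Adj w x) :
    Chordal G := by
  rintro n hn
  obtain ⟨m, rfl⟩ := Nat.exists_eq_add_of_le' hn
  refine ⟨fun f => ?_⟩
  obtain ⟨i, -, hi⟩ := Finset.exists_min_image Finset.univ f Finset.univ_nonempty
  have hnext : (cycleGraph (m + 4)).Adj i (i + 1) := by simp [cycleGraph_adj]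
  have hprev : (cycleGraph (m + 4)).Adj i (i - 1) := by simp [cycleGraph_adj]
  have hne : i + 1 ≠ i - 1 := fun h' => by
    have : (2 : Fin (m + 4)) = 0 := by linear_combination h'
    simp [Fin.ext_iff, Nat.mod_eq_of_lt (show 2 < m + 4 by omega)] at this
  have hnadj : ¬ (cycleGraph (m + 4)).Adj (i + 1) (i - 1) := by
    rw [cycleGraph_adj]
    rintro (h' | h')
    · have : (1 : Fin (m + 4)) = 0 := by linear_combination h'
      simp at this
    · have : (3 : Fin (m + 4)) = 0 := by linear_combination -h'
      simp [Fin.ext_iff, Nat.mod_eq_of_lt (show 3 < m + 4 by omega)] at this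
  have lt_of_adj : ∀ j, (cycleGraph (m + 4)).Adj i j → f i < f j := fun j hj =>
    (hi j (Finset.mem_univ j)).lt_of_ne (f.map_adj_iff.2 hj).ne
  exact hnadj (f.map_adj_iff.1 (h (lt_of_adj _ hnext) (lt_of_adj _ hprev) (f.injective.ne hne)
    (f.map_adj_iff.2 hnext) (f.map_adj_iff.2 hprev)))

end General

namespace QuadTriChain

/- Labels: the quad `Q_j` (`j < k + 2`) is `{4j, …, 4j+3}`, glued to a triangle along `4j+2, 4j+3`;
the corners `aᵢ, bᵢ, cᵢ` of `Tᵢ` (`i < k`) are `4k+8+3i + (0, 1, 2)`. `Bridge` joins `bᵢ, cᵢ` to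
`aᵢ₊₁, bᵢ₊₁`, and `Link` joins the glued edge of `Q_j` to the corners `r` of `Tᵢ` allowed by
`QuadTriLink k j i r`. -/
def SamePart (k x y : ℕ) : Prop :=
  x < 4 * k + 8 ∧ y < 4 * k + 8 ∧ x / 4 = y / 4 ∨
    4 * k + 8 ≤ x ∧ 4 * k + 8 ≤ y ∧ (x - (4 * k + 8)) / 3 = (y - (4 * k + 8)) / 3

def Bridge (k x y : ℕ) : Prop :=
  4 * k + 8 ≤ x ∧ (x - (4 * k + 8)) / 3 + 1 = (y - (4 * k + 8)) / 3 ∧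
    (x - (4 * k + 8)) % 3 ≠ 0 ∧ (y - (4 * k + 8)) % 3 ≠ 2

def QuadTriLink (k j i r : ℕ) : Prop :=
  j = 0 ∧ i = 0 ∧ r ≠ 2 ∨ 1 ≤ j ∧ j ≤ k ∧ i + 1 = j ∧ r ≠ 1 ∨ j = k + 1 ∧ i + 1 = k ∧ r ≠ 0

def Link (k x y : ℕ) : Prop :=
  x < 4 * k + 8 ∧ 2 ≤ x % 4 ∧ 4 * k + 8 ≤ y ∧
    QuadTriLink k (x / 4) ((y - (4 * k + 8)) / 3) ((y - (4 * k + 8)) % 3)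

def ChainRel (k x y : ℕ) : Prop := SamePart k x y ∨ Bridge k x y ∨ Link k x y

def chainGraph (k : ℕ) : SimpleGraph (Fin (7 * k + 8)) :=
  SimpleGraph.fromRel fun x y => ChainRel k x y

theorem chainGraph_adj {k : ℕ} {x y : Fin (7 * k + 8)} :
    (chainGraph k).Adj x y ↔ x ≠ y ∧ (ChainRel k x y ∨ ChainRel k y x) :=
  fromRel_adj _ _ _

theorem chainRel_of_lt {k x y : ℕ} (hxy : x < y) (h : ChainRel k y x) : ChainRel k x y := by
  rcases h with h | h | h
  · exact .inl (by unfold SamePart at *; omega)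
  · unfold Bridge at h; omega
  · unfold Link at h; omega

theorem chainGraph_adj_of_lt {k : ℕ} {x y : Fin (7 * k + 8)} (hxy : x < y) :
    (chainGraph k).Adj x y ↔ ChainRel k x y := by
  rw [chainGraph_adj]
  exact ⟨fun h => h.2.elim id (chainRel_of_lt hxy), fun h => ⟨hxy.ne, .inl h⟩⟩

theorem chainRel_of_upper_neighbors {k v w x : ℕ} (hw : v < w) (hx : v < x)
    (hvw : ChainRel k v w) (hvx : ChainRel k v x) : ChainRel k w x ∨ ChainRel k x w := by
  rcases hvw with hvw | hvw | hvw <;> rcases hvx with hvx | hvx | hvx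
  · exact .inl (.inl (by unfold SamePart at *; omega))
  · exact .inl (.inr (.inl (by unfold SamePart Bridge at *; omega)))
  · exact .inl (.inr (.inr (by unfold SamePart Link QuadTriLink at *; omega)))
  · exact .inr (.inr (.inl (by unfold SamePart Bridge at *; omega)))
  · exact .inl (.inl (by unfold SamePart Bridge at *; omega))
  · unfold Bridge Link at *; omega
  · exact .inr (.inr (.inr (by unfold SamePart Link QuadTriLink at *; omega)))
  · unfold Bridge Link at *; omega
  · exact .inl (.inl (by unfold SamePart Link QuadTriLink at *; omega))

theorem chordal_chainGraph (k : ℕ) : Chordal (chainGraph k) :=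
  chordal_of_forall_lt_adj fun _ _ _ hw hx hwx hvw hvx =>
    chainGraph_adj.2 ⟨hwx, chainRel_of_upper_neighbors hw hx ((chainGraph_adj_of_lt hw).1 hvw)
      ((chainGraph_adj_of_lt hx).1 hvx)⟩

def IsK4 (k a b c d : ℕ) : Prop :=
  a < b ∧ b < c ∧ c < d ∧ d < 7 * k + 8 ∧ ChainRel k a b ∧ ChainRel k a c ∧ ChainRel k a d ∧
    ChainRel k b c ∧ ChainRel k b d ∧ ChainRel k c d

theorem isK4_quad {k j : ℕ} (hj : j < k + 2) :
    IsK4 k (4 * j) (4 * j + 1) (4 * j + 2) (4 * j + 3) := by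
  unfold IsK4 ChainRel SamePart
  omega

theorem isK4_bridge {k i : ℕ} (hi : i + 1 < k) :
    IsK4 k (4 * k + 8 + 3 * i + 1) (4 * k + 8 + 3 * i + 2) (4 * k + 8 + 3 * i + 3)
      (4 * k + 8 + 3 * i + 4) := by
  unfold IsK4 ChainRel SamePart Bridge
  omega

theorem link_of_quadTriLink {k j i r e : ℕ} (he : e < 2) (hr3 : r < 3)
    (hr : QuadTriLink k j i r) (hj : j < k + 2) :
    Link k (4 * j + 2 + e) (4 * k + 8 + 3 * i + r) := by
  refine ⟨by omega, by omega, by omega, ?_⟩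
  rwa [show (4 * j + 2 + e) / 4 = j by omega,
    show (4 * k + 8 + 3 * i + r - (4 * k + 8)) / 3 = i by omega,
    show (4 * k + 8 + 3 * i + r - (4 * k + 8)) % 3 = r by omega]

theorem isK4_link {k j i r s : ℕ} (hi : i < k) (hrs : r < s) (hs : s < 3)
    (hr : QuadTriLink k j i r) (hs' : QuadTriLink k j i s) :
    IsK4 k (4 * j + 2) (4 * j + 3) (4 * k + 8 + 3 * i + r) (4 * k + 8 + 3 * i + s) := by
  have hj : j < k + 2 := by unfold QuadTriLink at hr; omega
  have same_quad : SamePart k (4 * j + 2) (4 * j + 3) := by unfold SamePart; omega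
  have same_tri : SamePart k (4 * k + 8 + 3 * i + r) (4 * k + 8 + 3 * i + s) := by
    unfold SamePart; omega
  refine ⟨by omega, by omega, by omega, by omega, .inl same_quad, .inr (.inr ?_), .inr (.inr ?_),
    .inr (.inr ?_), .inr (.inr ?_), .inl same_tri⟩
  · exact link_of_quadTriLink (e := 0) (by norm_num) (by omega) hr hj
  · exact link_of_quadTriLink (e := 0) (by norm_num) hs hs' hj
  · exact link_of_quadTriLink (e := 1) (by norm_num) (by omega) hr hj
  · exact link_of_quadTriLink (e := 1) (by norm_num) hs hs' hj

theorem isK4_link_first {k : ℕ} (hk : 0 < k) : IsK4 k 2 3 (4 * k + 8) (4 * k + 8 + 1) :=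
  isK4_link (j := 0) (i := 0) (r := 0) (s := 1) hk (by norm_num) (by norm_num)
    (by unfold QuadTriLink; omega) (by unfold QuadTriLink; omega)

theorem isK4_link_middle {k i : ℕ} (hi : i < k) :
    IsK4 k (4 * i + 6) (4 * i + 7) (4 * k + 8 + 3 * i) (4 * k + 8 + 3 * i + 2) :=
  isK4_link (j := i + 1) (r := 0) (s := 2) hi (by norm_num) (by norm_num)
    (by unfold QuadTriLink; omega) (by unfold QuadTriLink; omega)

theorem isK4_link_last {k : ℕ} (hk : 0 < k) :
    IsK4 k (4 * k + 6) (4 * k + 7) (4 * k + 8 + 3 * (k - 1) + 1) (4 * k + 8 + 3 * (k - 1) + 2) :=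
  isK4_link (j := k + 1) (i := k - 1) (r := 1) (s := 2) (by omega) (by norm_num) (by norm_num)
    (by unfold QuadTriLink; omega) (by unfold QuadTriLink; omega)

theorem exists_isK4_of_chainRel {k x y : ℕ} (hxy : x < y) (hy : y < 7 * k + 8)
    (h : ChainRel k x y) : ∃ a b c d, IsK4 k a b c d ∧
      (x = a ∨ x = b ∨ x = c ∨ x = d) ∧ (y = a ∨ y = b ∨ y = c ∨ y = d) := by
  rcases h with (⟨hx, -, hq⟩ | ⟨hx, -, ht⟩) | hb | ⟨hx, htop, hy', hl⟩
  · exact ⟨_, _, _, _, isK4_quad (j := x / 4) (by omega), by omega, by omega⟩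
  · set i := (x - (4 * k + 8)) / 3 with hi
    obtain h01 | h02 | h12 : (x - (4 * k + 8)) % 3 = 0 ∧ (y - (4 * k + 8)) % 3 = 1 ∨
        (x - (4 * k + 8)) % 3 = 0 ∧ (y - (4 * k + 8)) % 3 = 2 ∨
        (x - (4 * k + 8)) % 3 = 1 ∧ (y - (4 * k + 8)) % 3 = 2 := by omega
    · obtain hi0 | hi0 := Nat.eq_zero_or_pos i
      · exact ⟨_, _, _, _, isK4_link_first (by omega), by omega, by omega⟩
      · exact ⟨_, _, _, _, isK4_bridge (k := k) (i := i - 1) (by omega), by omega, by omega⟩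
    · exact ⟨_, _, _, _, isK4_link_middle (i := i) (by omega), by omega, by omega⟩
    · obtain hlast | hlast := eq_or_ne (i + 1) k
      · exact ⟨_, _, _, _, isK4_link_last (by omega), by omega, by omega⟩
      · exact ⟨_, _, _, _, isK4_bridge (k := k) (i := i) (by omega), by omega, by omega⟩
  · unfold Bridge at hb
    exact ⟨_, _, _, _, isK4_bridge (k := k) (i := (x - (4 * k + 8)) / 3) (by omega),
      by omega, by omega⟩
  · unfold QuadTriLink at hl
    rcases hl with hl | hl | hl
    · exact ⟨_, _, _, _, isK4_link_first (by omega), by omega, by omega⟩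
    · exact ⟨_, _, _, _, isK4_link_middle (i := (y - (4 * k + 8)) / 3) (by omega),
        by omega, by omega⟩
    · exact ⟨_, _, _, _, isK4_link_last (by omega), by omega, by omega⟩

theorem IsK4.exists_isClique {k a b c d : ℕ} (h : IsK4 k a b c d) {x y : Fin (7 * k + 8)}
    (hx : x.val = a ∨ x.val = b ∨ x.val = c ∨ x.val = d)
    (hy : y.val = a ∨ y.val = b ∨ y.val = c ∨ y.val = d) :
    ∃ s : Set (Fin (7 * k + 8)), (chainGraph k).IsClique s ∧ s.ncard = 4 ∧ x ∈ s ∧ y ∈ s := by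
  obtain ⟨hab, hbc, hcd, hd, rab, rac, rad, rbc, rbd, rcd⟩ := h
  let a' : Fin (7 * k + 8) := ⟨a, by omega⟩
  let b' : Fin (7 * k + 8) := ⟨b, by omega⟩
  let c' : Fin (7 * k + 8) := ⟨c, by omega⟩
  let d' : Fin (7 * k + 8) := ⟨d, hd⟩
  have adj {p q : Fin (7 * k + 8)} (hpq : p.val < q.val) (r : ChainRel k p q) :
      (chainGraph k).Adj p q :=
    (chainGraph_adj_of_lt hpq).2 r
  obtain ⟨hclique, hcard⟩ := isClique_ncard_eq_four (a := a') (b := b') (c := c') (d := d')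
    (adj hab rab) (adj (show a < c by omega) rac) (adj (show a < d by omega) rad) (adj hbc rbc)
    (adj (show b < d by omega) rbd) (adj hcd rcd)
  refine ⟨_, hclique, hcard, ?_, ?_⟩ <;>
    simp only [Set.mem_insert_iff, Set.mem_singleton_iff, Fin.ext_iff] <;> omega

theorem kChordal_chainGraph (k : ℕ) : KChordal 4 (chainGraph k) := by
  refine ⟨chordal_chainGraph k, fun v w hvw => ?_⟩
  wlog hlt : v < w generalizing v w
  · obtain ⟨s, hs, hcard, hws, hvs⟩ :=
      this w v hvw.symm (lt_of_le_of_ne (not_lt.1 hlt) hvw.ne.symm)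
    exact ⟨s, hs, hcard, hvs, hws⟩
  obtain ⟨a, b, c, d, hK, hv, hw⟩ :=
    exists_isK4_of_chainRel hlt w.isLt ((chainGraph_adj_of_lt hlt).1 hvw)
  exact hK.exists_isClique hv hw

def chainClique (k c : ℕ) : Set (Fin (7 * k + 8)) :=
  {x | x.val < 4 * k + 8 ∧ x.val / 4 = c ∨
    4 * k + 8 ≤ x.val ∧ k + 2 + (x.val - (4 * k + 8)) / 3 = c}

theorem isClique_chainClique (k c : ℕ) : (chainGraph k).IsClique (chainClique k c) :=
  fun x hx y hy hxy => chainGraph_adj.2 ⟨hxy, .inl (.inl (by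
    simp only [chainClique, Set.mem_ofPred_eq] at hx hy; unfold SamePart; omega))⟩

theorem disjoint_chainClique (k : ℕ) {c c' : ℕ} (h : c ≠ c') :
    Disjoint (chainClique k c) (chainClique k c') :=
  Set.disjoint_left.2 fun x hx hx' => h (by
    simp only [chainClique, Set.mem_ofPred_eq] at hx hx'; omega)

theorem chainClique_nontrivial {k c : ℕ} (hc : c < 2 * k + 2) : (chainClique k c).Nontrivial := by
  obtain hq | ht := lt_or_ge c (k + 2)
  · exact ⟨⟨4 * c, by omega⟩, by simp [chainClique]; omega, ⟨4 * c + 1, by omega⟩,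
      by simp [chainClique]; omega, by simp [Fin.ext_iff]⟩
  · exact ⟨⟨4 * k + 8 + 3 * (c - (k + 2)), by omega⟩, by simp [chainClique]; omega,
      ⟨4 * k + 8 + 3 * (c - (k + 2)) + 1, by omega⟩, by simp [chainClique]; omega,
      by simp [Fin.ext_iff]⟩

theorem isMaximalClique_chainClique_of_lt {k c : ℕ} (hc : c < k + 2) :
    IsMaximalClique (chainGraph k) (chainClique k c) := by
  refine isMaximalClique_of_forall_exists_not_adj (isClique_chainClique k c) fun u hu =>
    ⟨⟨4 * c, by omega⟩, by simp [chainClique]; omega, fun hadj => hu ?_⟩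
  simp only [chainGraph_adj] at hadj
  simp only [chainClique, Set.mem_ofPred_eq]
  unfold ChainRel SamePart Bridge Link at hadj
  omega

theorem isMaximalClique_chainClique_of_le {k c : ℕ} (hc : k + 2 ≤ c) (hc' : c < 2 * k + 2) :
    IsMaximalClique (chainGraph k) (chainClique k c) := by
  refine isMaximalClique_of_forall_exists_not_adj (isClique_chainClique k c) fun u hu => ?_
  by_contra! hall
  set t := 4 * k + 8 + 3 * (c - (k + 2))
  have corner (r : ℕ) (hr : r < 3) : ChainRel k u (t + r) ∨ ChainRel k (t + r) u :=
    (chainGraph_adj.1 (hall ⟨t + r, by omega⟩ (by simp [chainClique]; omega))).2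
  have h0 := corner 0 (by norm_num)
  have h1 := corner 1 (by norm_num)
  have h2 := corner 2 (by norm_num)
  simp only [chainClique, Set.mem_ofPred_eq] at hu
  unfold ChainRel SamePart Bridge Link QuadTriLink at h0 h1 h2
  omega

theorem isMaximalClique_chainClique {k c : ℕ} (hc : c < 2 * k + 2) :
    IsMaximalClique (chainGraph k) (chainClique k c) :=
  (lt_or_ge c (k + 2)).elim isMaximalClique_chainClique_of_lt
    (isMaximalClique_chainClique_of_le · hc)

end QuadTriChain

/-- For every integer `k ≥ 0` there is a 4-chordal graph on exactly `7k+8`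
vertices containing `2k+2` pairwise vertex-disjoint maximal non-trivial cliques;
consequently, every clique transversal of this graph has at least `2k+2`
vertices. -/
theorem exists_four_chordal_with_disjoint_max_cliques (k : ℕ) :
    ∃ G : SimpleGraph (Fin (7 * k + 8)),
      KChordal 4 G ∧
      ∃ cliques : Fin (2 * k + 2) → Set (Fin (7 * k + 8)),
        (∀ i, IsMaximalClique G (cliques i) ∧ (cliques i).Nontrivial) ∧
        (∀ i j, i ≠ j → Disjoint (cliques i) (cliques j)) ∧
        ∀ U : Set (Fin (7 * k + 8)), CliqueTransversal G U → 2 * k + 2 ≤ U.ncard := by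
  have hcliques (i : Fin (2 * k + 2)) :
      IsMaximalClique (QuadTriChain.chainGraph k) (QuadTriChain.chainClique k i) ∧
        (QuadTriChain.chainClique k i).Nontrivial :=
    ⟨QuadTriChain.isMaximalClique_chainClique i.isLt, QuadTriChain.chainClique_nontrivial i.isLt⟩
  have hdisj : Pairwise fun i j : Fin (2 * k + 2) =>
      Disjoint (QuadTriChain.chainClique k i) (QuadTriChain.chainClique k j) :=
    fun _ _ hij => QuadTriChain.disjoint_chainClique k (Fin.val_ne_of_ne hij)
  refine ⟨QuadTriChain.chainGraph k, QuadTriChain.kChordal_chainGraph k,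
    fun i => QuadTriChain.chainClique k i, hcliques, fun _ _ hij => hdisj hij, fun U hU => ?_⟩
  simpa using hU.card_le_ncard hcliques hdisj U.toFinite
end

section
/- Let T be a nice tree-decomposition of a 4-chordal graph G, and let u be a node of T corresponding to a maximal clique {v₁, v₂, v₃} of G on exactly three vertices. Then u has three distinct neighbours u₁, u₂, u₃ in T such that the vertex set associated with u₁ contains {v₁, v₂}, the vertex set associated with u₂ contains {v₁, v₃}, and the vertex set associated with u₃ contains {v₂, v₃}. -/
open SimpleGraph

/-- A *tree-decomposition* of a graph `G` is a tree together with a nonempty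
bag of vertices of `G` at each node such that two vertices of `G` are adjacent
iff they are distinct and lie in a common bag, and for each vertex of `G` the
set of nodes whose bag contains it is nonempty and induces a subtree. -/
structure TreeDecomp {V : Type*} (G : SimpleGraph V) (N : Type*) where
  /-- the underlying graph on the nodes -/
  tree : SimpleGraph N
  /-- the underlying graph on the nodes is a tree -/
  isTree : tree.IsTree
  /-- the set of vertices of `G` associated with a node -/
  bag : N → Set V
  bag_nonempty : ∀ u : N, (bag u).Nonempty
  /-- two vertices of `G` are joined by an edge iff they are distinct and some
  bag contains both of them -/
  adj_iff : ∀ v w : V, G.Adj v w ↔ v ≠ w ∧ ∃ u : N, v ∈ bag u ∧ w ∈ bag u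
  /-- every vertex of `G` belongs to at least one bag -/
  mem_bag_nonempty : ∀ v : V, {u : N | v ∈ bag u}.Nonempty
  /-- the nodes whose bag contains a given vertex induce a subtree,
  i.e. a connected subgraph of the tree -/
  subtree : ∀ v : V, (tree.induce {u : N | v ∈ bag u}).Connected

/-- A *nice tree-decomposition* of a 4-chordal graph: a rooted tree-decomposition
(the rooting is given by a parent function that fixes the root, maps each
non-root node to an adjacent node, and whose iteration reaches the root) such
that (1) adjacent nodes have distinct bags; (2) each bag has at least 3
vertices, and bags with exactly 3 vertices are maximal cliques; (3) a non-root
bag with `k ≥ 5` vertices shares `k-1` vertices with the bag of its parent;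
(4) if `G` has a maximal clique on exactly three vertices, then the bag of the
root is such a clique. -/
structure NiceTreeDecomp {V : Type*} (G : SimpleGraph V) (N : Type*)
    extends TreeDecomp G N where
  /-- the root node -/
  root : N
  /-- the parent function of the rooted tree -/
  parent : N → N
  parent_root : parent root = root
  parent_adj : ∀ u : N, u ≠ root → tree.Adj u (parent u)
  parent_reaches_root : ∀ u : N, ∃ n : ℕ, parent^[n] u = root
  /-- no two adjacent nodes correspond to the same clique -/
  adj_bag_ne : ∀ u w : N, tree.Adj u w → bag u ≠ bag w
  /-- every node corresponds to a clique on at least three vertices -/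
  three_le_bag : ∀ u : N, 3 ≤ (bag u).ncard
  /-- a bag with exactly three vertices is a maximal clique -/
  bag_three_maximal : ∀ u : N, (bag u).ncard = 3 → IsMaximalClique G (bag u)
  /-- a non-root bag on `k ≥ 5` vertices shares `k - 1` vertices with the bag
  of the parent -/
  bag_big_inter_parent : ∀ u : N, u ≠ root → 5 ≤ (bag u).ncard →
    (bag u).ncard - 1 ≤ (bag u ∩ bag (parent u)).ncard
  /-- if `G` contains a maximal clique on exactly three vertices, then the root
  corresponds to such a clique -/
  root_bag_three : (∃ C : Set V, IsMaximalClique G C ∧ C.ncard = 3) →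
    IsMaximalClique G (bag root) ∧ (bag root).ncard = 3

/-!
Every edge `v₁v₂` of the triangle lies in a 4-clique, so some `w` outside the bag of `u` is
adjacent to both `v₁` and `v₂`. The subtrees of `v₁`, `v₂` and `w` pairwise meet, and the one of
`w` avoids `u`; in a tree this forces the first steps from `u` towards a bag of `v₁w` and towards
a bag of `v₂w` to coincide, which gives a neighbour of `u` whose bag contains `v₁` and `v₂`.
The three neighbours so obtained are distinct, since a neighbour whose bag contained the whole
triangle would, by maximality, have the same bag as `u`.
-/

namespace SimpleGraph

variable {V : Type*} {G : SimpleGraph V}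

lemma exists_isPath_support_subset_of_connected_induce {S : Set V}
    (hS : (G.induce S).Connected) {x y : V} (hx : x ∈ S) (hy : y ∈ S) :
    ∃ p : G.Walk x y, p.IsPath ∧ ∀ z ∈ p.support, z ∈ S := by
  classical
  obtain ⟨W⟩ := hS.preconnected ⟨x, hx⟩ ⟨y, hy⟩
  set W' := W.map (Embedding.induce S).toHom
  refine ⟨W'.bypass, W'.bypass_isPath, fun z hz => ?_⟩
  obtain ⟨⟨z', hz'⟩, -, rfl⟩ :=
    List.mem_map.1 (Walk.support_map _ W ▸ W'.support_bypass_subset_support hz)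
  exact hz'

lemma IsAcyclic.eq_of_adj_of_walk_of_notMem_support (hG : G.IsAcyclic) {u y₁ y₂ : V}
    (h₁ : G.Adj u y₁) (h₂ : G.Adj u y₂) (W : G.Walk y₁ y₂) (hu : u ∉ W.support) : y₁ = y₂ := by
  classical
  have hP : (Walk.cons h₁ W.bypass).IsPath :=
    W.bypass_isPath.cons fun h => hu (W.support_bypass_subset_support h)
  simpa using (hG.eq_snd_of_adj_start hP h₂ (by simp)).symm

/-- A Helly-type property of subtrees of a forest. -/
theorem IsAcyclic.exists_adj_mem_inter (hG : G.IsAcyclic) {A B C : Set V}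
    (hA : (G.induce A).Connected) (hB : (G.induce B).Connected) (hC : (G.induce C).Connected)
    {u x y : V} (huA : u ∈ A) (huB : u ∈ B) (hxA : x ∈ A) (hxC : x ∈ C) (hyB : y ∈ B)
    (hyC : y ∈ C) (huC : u ∉ C) : ∃ v, G.Adj u v ∧ v ∈ A ∧ v ∈ B := by
  obtain ⟨q, hq, hqA⟩ := exists_isPath_support_subset_of_connected_induce hA huA hxA
  obtain ⟨r, hr, hrB⟩ := exists_isPath_support_subset_of_connected_induce hB huB hyB
  obtain ⟨p, -, hpC⟩ := exists_isPath_support_subset_of_connected_induce hC hxC hyC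
  cases q with
  | nil => exact absurd hxC huC
  | cons hux q =>
    cases r with
    | nil => exact absurd hyC huC
    | cons huy r =>
      rw [Walk.cons_isPath_iff] at hq hr
      have hu : u ∉ (q.append (p.append r.reverse)).support := by
        simp only [Walk.mem_support_append_iff, Walk.support_reverse, List.mem_reverse, not_or]
        exact ⟨hq.2, fun h => huC (hpC u h), hr.2⟩
      obtain rfl := hG.eq_of_adj_of_walk_of_notMem_support hux huy _ hu
      exact ⟨_, hux, hqA _ (by simp), hrB _ (by simp)⟩

end SimpleGraph

namespace TreeDecomp

variable {V N : Type*} {G : SimpleGraph V} (T : TreeDecomp G N)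

lemma isClique_bag (x : N) : G.IsClique (T.bag x) :=
  fun _ hp _ hq hpq => (T.adj_iff _ _).2 ⟨hpq, x, hp, hq⟩

lemma exists_adj_mem_bag_of_adj_of_notMem {u : N} {a b w : V} (ha : a ∈ T.bag u)
    (hb : b ∈ T.bag u) (hw : w ∉ T.bag u) (haw : G.Adj a w) (hbw : G.Adj b w) :
    ∃ y, T.tree.Adj u y ∧ a ∈ T.bag y ∧ b ∈ T.bag y := by
  obtain ⟨-, x, hxa, hxw⟩ := (T.adj_iff a w).1 haw
  obtain ⟨-, y, hyb, hyw⟩ := (T.adj_iff b w).1 hbw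
  exact T.isTree.isAcyclic.exists_adj_mem_inter (T.subtree a) (T.subtree b) (T.subtree w)
    ha hb hxa hxw hyb hyw hw

lemma exists_adj_mem_bag_of_kChordal {k : ℕ} (hG : KChordal k G) {u : N}
    (hfin : (T.bag u).Finite) (hk : (T.bag u).ncard < k) {a b : V} (ha : a ∈ T.bag u)
    (hb : b ∈ T.bag u) (hab : a ≠ b) : ∃ y, T.tree.Adj u y ∧ a ∈ T.bag y ∧ b ∈ T.bag y := by
  obtain ⟨s, hs, hsk, has, hbs⟩ := hG.2 a b ((T.adj_iff a b).2 ⟨hab, u, ha, hb⟩)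
  obtain ⟨w, hws, hwu⟩ := Set.not_subset.1 fun h : s ⊆ T.bag u =>
    (Set.ncard_le_ncard h hfin).not_gt (hsk ▸ hk)
  exact T.exists_adj_mem_bag_of_adj_of_notMem ha hb hwu
    (hs has hws (ne_of_mem_of_not_mem ha hwu)) (hs hbs hws (ne_of_mem_of_not_mem hb hwu))

end TreeDecomp

lemma NiceTreeDecomp.not_subset_bag_of_adj {V N : Type*} {G : SimpleGraph V}
    (T : NiceTreeDecomp G N) {u y : N} (hmax : IsMaximalClique G (T.bag u))
    (huy : T.tree.Adj u y) : ¬ T.bag u ⊆ T.bag y :=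
  fun h => T.adj_bag_ne u y huy (hmax.2 _ (T.isClique_bag y) h)

theorem nice_treeDecomp_triangle_neighbours_general {V : Type*} {N : Type*}
    (G : SimpleGraph V) (hG : KChordal 4 G) (T : NiceTreeDecomp G N) (u : N)
    (v₁ v₂ v₃ : V) (h12 : v₁ ≠ v₂) (h13 : v₁ ≠ v₃) (h23 : v₂ ≠ v₃)
    (hbag : T.bag u = {v₁, v₂, v₃}) (hmax : IsMaximalClique G (T.bag u)) :
    ∃ u₁ u₂ u₃ : N, u₁ ≠ u₂ ∧ u₁ ≠ u₃ ∧ u₂ ≠ u₃ ∧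
      T.tree.Adj u u₁ ∧ T.tree.Adj u u₂ ∧ T.tree.Adj u u₃ ∧
      {v₁, v₂} ⊆ T.bag u₁ ∧ {v₁, v₃} ⊆ T.bag u₂ ∧ {v₂, v₃} ⊆ T.bag u₃ := by
  have hfin : (T.bag u).Finite := hbag ▸ Set.toFinite _
  have hlt : (T.bag u).ncard < 4 := by
    rw [hbag, Set.ncard_eq_three.2 ⟨v₁, v₂, v₃, h12, h13, h23, rfl⟩]
    norm_num
  have hv₁ : v₁ ∈ T.bag u := by simp [hbag]
  have hv₂ : v₂ ∈ T.bag u := by simp [hbag]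
  have hv₃ : v₃ ∈ T.bag u := by simp [hbag]
  obtain ⟨u₁, hu₁, h₁₁, h₁₂⟩ := T.exists_adj_mem_bag_of_kChordal hG hfin hlt hv₁ hv₂ h12
  obtain ⟨u₂, hu₂, h₂₁, h₂₃⟩ := T.exists_adj_mem_bag_of_kChordal hG hfin hlt hv₁ hv₃ h13
  obtain ⟨u₃, hu₃, h₃₂, h₃₃⟩ := T.exists_adj_mem_bag_of_kChordal hG hfin hlt hv₂ hv₃ h23
  have triangle_not_subset : ∀ y, T.tree.Adj u y → v₁ ∈ T.bag y → v₂ ∈ T.bag y →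
      v₃ ∉ T.bag y := fun y huy h₁ h₂ h₃ =>
    T.not_subset_bag_of_adj hmax huy (hbag ▸ Set.insert_subset h₁ (Set.pair_subset h₂ h₃))
  refine ⟨u₁, u₂, u₃, ?_, ?_, ?_, hu₁, hu₂, hu₃, Set.pair_subset h₁₁ h₁₂,
    Set.pair_subset h₂₁ h₂₃, Set.pair_subset h₃₂ h₃₃⟩
  · rintro rfl; exact triangle_not_subset u₁ hu₁ h₁₁ h₁₂ h₂₃
  · rintro rfl; exact triangle_not_subset u₁ hu₁ h₁₁ h₁₂ h₃₃
  · rintro rfl; exact triangle_not_subset u₂ hu₂ h₂₁ h₃₂ h₂₃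

/-- Let `T` be a nice tree-decomposition of a 4-chordal graph `G` and let `u`
be a node of `T` corresponding to a maximal clique `{v₁, v₂, v₃}` of `G` on
exactly three vertices. Then `u` has three distinct neighbours `u₁`, `u₂`, `u₃`
whose bags contain `{v₁, v₂}`, `{v₁, v₃}` and `{v₂, v₃}`, respectively. -/
theorem nice_treeDecomp_triangle_neighbours {V : Type*} {N : Type*} [Fintype V]
    (G : SimpleGraph V) (hG : KChordal 4 G) (T : NiceTreeDecomp G N) (u : N)
    (v₁ v₂ v₃ : V) (h12 : v₁ ≠ v₂) (h13 : v₁ ≠ v₃) (h23 : v₂ ≠ v₃)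
    (hbag : T.bag u = {v₁, v₂, v₃}) (hmax : IsMaximalClique G (T.bag u)) :
    ∃ u₁ u₂ u₃ : N, u₁ ≠ u₂ ∧ u₁ ≠ u₃ ∧ u₂ ≠ u₃ ∧
      T.tree.Adj u u₁ ∧ T.tree.Adj u u₂ ∧ T.tree.Adj u u₃ ∧
      {v₁, v₂} ⊆ T.bag u₁ ∧ {v₁, v₃} ⊆ T.bag u₂ ∧ {v₂, v₃} ⊆ T.bag u₃ :=
  nice_treeDecomp_triangle_neighbours_general G hG T u v₁ v₂ v₃ h12 h13 h23 hbag hmax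
end
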